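/- arXiv:2109.15167 — 3 statements merged into one kernel-verified Lean document; each statement's English description precedes it below -/
import Mathlib

section
/- Let n ≥ 1 be an odd integer. Then ∫₀^{2π} sin^{n-1}τ · cos^{n-1}τ / (sin^{2n}τ + cos^{2n}τ) dτ = 2π/n. -/
/-!
Shifting by `π/2` turns `(sin, cos)` into `(cos, -sin)`; since `n - 1` and `2n` are even the
integrand is `π/2`-periodic, so the integral over `[0, 2π]` is four times the integral over
`[-π/4, π/4]`. There `cos τ > 0`, and the integrand is the derivative of `arctan (tan τ ^ n) / n`,
which increases by `(π/4 - (-π/4)) / n` because `n` is odd.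
-/

open Real intervalIntegral

noncomputable def sinCosIntegrand (n : ℕ) (τ : ℝ) : ℝ :=
  sin τ ^ (n - 1) * cos τ ^ (n - 1) / (sin τ ^ (2 * n) + cos τ ^ (2 * n))

lemma sin_pow_add_cos_pow_pos (k : ℕ) (x : ℝ) : 0 < sin x ^ (2 * k) + cos x ^ (2 * k) := by
  simp only [pow_mul]
  rcases eq_or_ne (sin x) 0 with h | h
  · have hc : cos x ^ 2 = 1 := by nlinarith [sin_sq_add_cos_sq x]
    rw [h, hc]
    positivity
  · have := pow_pos (pow_two_pos_of_ne_zero h) k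
    positivity

lemma continuous_sinCosIntegrand (n : ℕ) : Continuous (sinCosIntegrand n) :=
  Continuous.div (by fun_prop) (by fun_prop) fun τ => (sin_pow_add_cos_pow_pos n τ).ne'

lemma periodic_sinCosIntegrand {n : ℕ} (hn : Odd n) :
    Function.Periodic (sinCosIntegrand n) (π / 2) := by
  intro τ
  have hn1 : Even (n - 1) := hn.tsub_odd odd_one
  simp only [sinCosIntegrand, sin_add_pi_div_two, cos_add_pi_div_two, hn1.neg_pow,
    (even_two_mul n).neg_pow]
  ring

lemma hasDerivAt_arctan_tan_pow_div {n : ℕ} (hn : n ≠ 0) {τ : ℝ} (hτ : cos τ ≠ 0) :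
    HasDerivAt (fun x => arctan (tan x ^ n) / n) (sinCosIntegrand n τ) τ := by
  refine ((((hasDerivAt_tan hτ).fun_pow n).arctan).div_const (n : ℝ)).congr_deriv ?_
  obtain ⟨k, rfl⟩ := Nat.exists_eq_add_one_of_ne_zero hn
  have hden := sin_pow_add_cos_pow_pos (k + 1) τ
  simp only [sinCosIntegrand, tan_eq_sin_div_cos, Nat.add_sub_cancel, div_pow]
  field_simp
  ring

lemma integral_sinCosIntegrand_neg_pi_div_four {n : ℕ} (hn : Odd n) :
    ∫ τ in -(π / 4)..π / 4, sinCosIntegrand n τ = π / (2 * n) := by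
  have hderiv : ∀ τ ∈ Set.uIcc (-(π / 4)) (π / 4),
      HasDerivAt (fun x => arctan (tan x ^ n) / n) (sinCosIntegrand n τ) τ := by
    intro τ hτ
    rw [Set.uIcc_of_le (by linarith [pi_pos])] at hτ
    refine hasDerivAt_arctan_tan_pow_div hn.pos.ne' (cos_pos_of_mem_Ioo ⟨?_, ?_⟩).ne' <;>
      linarith [hτ.1, hτ.2, pi_pos]
  rw [integral_eq_sub_of_hasDerivAt hderiv
    ((continuous_sinCosIntegrand n).intervalIntegrable _ _)]
  have hn0 : (n : ℝ) ≠ 0 := by exact_mod_cast hn.pos.ne'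
  simp only [tan_neg, tan_pi_div_four, one_pow, hn.neg_one_pow, arctan_neg, arctan_one]
  field_simp
  ring

theorem stmt_1_general (n : ℕ) (hodd : Odd n) :
    ∫ τ in (0:ℝ)..(2 * π),
        Real.sin τ ^ (n - 1) * Real.cos τ ^ (n - 1) /
          (Real.sin τ ^ (2 * n) + Real.cos τ ^ (2 * n)) = 2 * π / n := by
  have hper := periodic_sinCosIntegrand hodd
  have hint : ∀ a b : ℝ, IntervalIntegrable (sinCosIntegrand n) MeasureTheory.volume a b :=
    fun a b => (continuous_sinCosIntegrand n).intervalIntegrable a b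
  calc ∫ τ in (0:ℝ)..2 * π, sinCosIntegrand n τ
      = ∫ τ in (0:ℝ)..0 + (4 : ℤ) • (π / 2), sinCosIntegrand n τ := by
        congr 1; simp only [zero_add, zsmul_eq_mul]; push_cast; ring
    _ = (4 : ℤ) • ∫ τ in -(π / 4)..-(π / 4) + π / 2, sinCosIntegrand n τ := by
        rw [hper.intervalIntegral_add_zsmul_eq 4 0 hint, hper.intervalIntegral_add_eq 0]
    _ = 2 * π / n := by
        rw [show -(π / 4) + π / 2 = π / 4 by ring, integral_sinCosIntegrand_neg_pi_div_four hodd,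
          zsmul_eq_mul]
        push_cast
        ring

theorem stmt_1 (n : ℕ) (hn : 1 ≤ n) (hodd : Odd n) :
    ∫ τ in (0:ℝ)..(2 * π),
        Real.sin τ ^ (n - 1) * Real.cos τ ^ (n - 1) /
          (Real.sin τ ^ (2 * n) + Real.cos τ ^ (2 * n)) = 2 * π / n :=
  stmt_1_general n hodd
end

section
/- Let (y_l) be a strictly decreasing sequence of positive reals converging to 0 such that y_l − y_{l+1} ≍ y_l^γ as l → ∞ for some γ > 1 (i.e., there are constants 0 < A ≤ B with A·y_l^γ ≤ y_l − y_{l+1} ≤ B·y_l^γ for all large l). Then y_l ≍ l^{−1/(γ−1)} as l → ∞, i.e., there are constants 0 < A' ≤ B' with A'·l^{−1/(γ−1)} ≤ y_l ≤ B'·l^{−1/(γ−1)} for all large l. -/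
open Filter Real

theorem stmt_11 (y : ℕ → ℝ) (hpos : ∀ l, 0 < y l) (hdec : StrictAnti y)
    (hlim : Filter.Tendsto y Filter.atTop (nhds 0))
    (γ : ℝ) (hγ : 1 < γ) (A B : ℝ) (hA : 0 < A) (hAB : A ≤ B)
    (hcomp : ∀ᶠ l : ℕ in Filter.atTop, A * y l ^ γ ≤ y l - y (l + 1) ∧
      y l - y (l + 1) ≤ B * y l ^ γ) :
    ∃ A' B' : ℝ, 0 < A' ∧ A' ≤ B' ∧
      ∀ᶠ l : ℕ in Filter.atTop, A' * (l : ℝ) ^ (-(1 / (γ - 1))) ≤ y l ∧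
        y l ≤ B' * (l : ℝ) ^ (-(1 / (γ - 1))) := by
  have hB : 0 < B := lt_of_lt_of_le hA hAB
  obtain ⟨β, hβdef⟩ : ∃ b : ℝ, γ - 1 = b := ⟨γ - 1, rfl⟩
  rw [hβdef]
  have hβ : 0 < β := by rw [← hβdef]; linarith
  set z : ℕ → ℝ := fun l => y l ^ (-β) with hzdef
  have hzpos : ∀ l, 0 < z l := fun l => rpow_pos_of_pos (hpos l) _
  have hγ0 : (0 : ℝ) ≤ γ := by linarith
  -- eventually B * y l ^ β ≤ 1/2
  have htend : Tendsto (fun l => B * (y l) ^ β) atTop (nhds 0) := by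
    have h1 : Tendsto (fun l => (y l) ^ β) atTop (nhds ((0 : ℝ) ^ β)) :=
      hlim.rpow_const (Or.inr hβ.le)
    rw [Real.zero_rpow hβ.ne'] at h1
    simpa using h1.const_mul B
  have hhalf : ∀ᶠ l in atTop, B * (y l) ^ β ≤ 1 / 2 :=
    htend.eventually_le_const (by norm_num)
  obtain ⟨N, hN⟩ := eventually_atTop.mp (hcomp.and hhalf)
  have h2γ : (0 : ℝ) < 2 ^ γ := rpow_pos_of_pos two_pos γ
  have h1le2γ : (1 : ℝ) ≤ 2 ^ γ := by
    have := Real.rpow_le_rpow_of_exponent_le (one_le_two) hγ0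
    simpa using this
  -- key step bound
  have key : ∀ l, N ≤ l → β * A ≤ z (l + 1) - z l ∧ z (l + 1) - z l ≤ β * B * 2 ^ γ := by
    intro l hl
    obtain ⟨⟨hd1, hd2⟩, hhalfl⟩ := hN l hl
    have hy : 0 < y l := hpos l
    have hy1 : 0 < y (l + 1) := hpos (l + 1)
    have hlt : y (l + 1) < y l := hdec (Nat.lt_succ_self l)
    have hdpos : 0 < y l - y (l + 1) := by linarith
    have hyγ : y l ^ γ = y l ^ β * y l := by
      rw [show γ = β + 1 by rw [← hβdef]; ring, Real.rpow_add hy, Real.rpow_one]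
    have hy2 : y l / 2 ≤ y (l + 1) := by
      have h2 : y l - y (l + 1) ≤ 1 / 2 * y l := by
        calc y l - y (l + 1) ≤ B * y l ^ γ := hd2
          _ = B * y l ^ β * y l := by rw [hyγ]; ring
          _ ≤ 1 / 2 * y l := mul_le_mul_of_nonneg_right hhalfl hy.le
      linarith
    have hy2pos : 0 < y l / 2 := by positivity
    -- mean value theorem
    obtain ⟨ξ, hξ, hslope⟩ := exists_hasDerivAt_eq_slope (fun t : ℝ => t ^ (-β))
      (fun t : ℝ => -β * t ^ (-β - 1)) hlt
      (fun t ht => by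
        have ht0 : t ≠ 0 := by
          have := ht.1; intro h; rw [h] at this; linarith
        exact (Real.continuousAt_rpow_const t (-β) (Or.inl ht0)).continuousWithinAt)
      (fun t ht => Real.hasDerivAt_rpow_const (Or.inl (by
        have := ht.1; intro h; rw [h] at this; linarith)))
    have hξ1 : y (l + 1) < ξ := hξ.1
    have hξ2 : ξ < y l := hξ.2
    have hξpos : 0 < ξ := lt_trans hy1 hξ1
    have hne : y l - y (l + 1) ≠ 0 := ne_of_gt hdpos
    have h2 : (-β * ξ ^ (-β - 1)) * (y l - y (l + 1))
        = y l ^ (-β) - y (l + 1) ^ (-β) := (eq_div_iff hne).mp hslope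
    have hexp : -β - 1 = -γ := by rw [← hβdef]; ring
    rw [hexp] at h2
    have heq : z (l + 1) - z l = β * ξ ^ (-γ) * (y l - y (l + 1)) := by
      simp only [hzdef]
      linear_combination h2
    have hinv : y l ^ (-γ) * y l ^ γ = 1 := by
      rw [Real.rpow_neg hy.le, inv_mul_cancel₀ (ne_of_gt (rpow_pos_of_pos hy γ))]
    constructor
    · rw [heq]
      have hξb : y l ^ (-γ) ≤ ξ ^ (-γ) :=
        Real.rpow_le_rpow_of_nonpos hξpos hξ2.le (neg_nonpos.mpr hγ0)
      have hm : y l ^ (-γ) * (A * y l ^ γ) ≤ ξ ^ (-γ) * (y l - y (l + 1)) :=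
        mul_le_mul hξb hd1 (by positivity) (by positivity)
      calc β * A = β * (y l ^ (-γ) * (A * y l ^ γ)) := by
              rw [show y l ^ (-γ) * (A * y l ^ γ) = A * (y l ^ (-γ) * y l ^ γ) by ring,
                hinv, mul_one]
        _ ≤ β * (ξ ^ (-γ) * (y l - y (l + 1))) := mul_le_mul_of_nonneg_left hm hβ.le
        _ = β * ξ ^ (-γ) * (y l - y (l + 1)) := by ring
    · rw [heq]
      have hhalfpow : (y l / 2) ^ (-γ) = 2 ^ γ * y l ^ (-γ) := by
        rw [Real.div_rpow hy.le (by norm_num), Real.rpow_neg (by norm_num : (0:ℝ) ≤ 2),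
          div_eq_mul_inv, inv_inv, mul_comm]
      have hξb' : ξ ^ (-γ) ≤ 2 ^ γ * y l ^ (-γ) := by
        rw [← hhalfpow]
        exact Real.rpow_le_rpow_of_nonpos hy2pos (by linarith) (neg_nonpos.mpr hγ0)
      have hm : ξ ^ (-γ) * (y l - y (l + 1)) ≤ (2 ^ γ * y l ^ (-γ)) * (B * y l ^ γ) :=
        mul_le_mul hξb' hd2 hdpos.le (by positivity)
      calc β * ξ ^ (-γ) * (y l - y (l + 1)) = β * (ξ ^ (-γ) * (y l - y (l + 1))) := by ring
        _ ≤ β * ((2 ^ γ * y l ^ (-γ)) * (B * y l ^ γ)) := mul_le_mul_of_nonneg_left hm hβ.le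
        _ = β * B * 2 ^ γ * (y l ^ (-γ) * y l ^ γ) := by ring
        _ = β * B * 2 ^ γ := by rw [hinv, mul_one]
  set c := β * A with hcdef
  set C := β * B * 2 ^ γ with hCdef
  have hc : 0 < c := by positivity
  have hCpos : 0 < C := by positivity
  have hcC : c ≤ C := by
    have h1 : β * A ≤ β * B := mul_le_mul_of_nonneg_left hAB hβ.le
    rw [hcdef, hCdef]
    nlinarith [mul_le_mul_of_nonneg_left h1le2γ (mul_nonneg hβ.le hB.le)]
  -- growth by induction
  have grow : ∀ k : ℕ, z N + c * k ≤ z (N + k) ∧ z (N + k) ≤ z N + C * k := by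
    intro k
    induction k with
    | zero => simp
    | succ k ih =>
      obtain ⟨h1, h2⟩ := key (N + k) (Nat.le_add_right N k)
      have hrw : N + (k + 1) = (N + k) + 1 := by omega
      rw [hrw]
      push_cast
      constructor
      · have := ih.1; linarith
      · have := ih.2; linarith
  set C' := z N + C with hC'def
  have hC'pos : 0 < C' := by have := hzpos N; rw [hC'def]; linarith
  have hcC' : c / 2 ≤ C' := by rw [hC'def]; linarith [hzpos N]
  refine ⟨C' ^ (-(1 / β)), (c / 2) ^ (-(1 / β)), by positivity, ?_, ?_⟩
  · exact Real.rpow_le_rpow_of_nonpos (by positivity) hcC'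
      (neg_nonpos.mpr (by positivity))
  · filter_upwards [eventually_ge_atTop (2 * N + 2)] with l hl
    have hlN : N ≤ l := by omega
    obtain ⟨g1, g2⟩ := grow (l - N)
    have hrw : N + (l - N) = l := by omega
    rw [hrw] at g1 g2
    rw [Nat.cast_sub hlN] at g1 g2
    have hl2 : (2 : ℝ) * N + 2 ≤ l := by exact_mod_cast hl
    have hl1 : (1 : ℝ) ≤ l := by linarith [Nat.cast_nonneg (α := ℝ) N]
    have hlpos : (0 : ℝ) < l := by linarith
    have hzlo : c / 2 * l ≤ z l := by
      have hNl : (N : ℝ) ≤ (l : ℝ) / 2 - 1 := by linarith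
      nlinarith [hzpos N]
    have hzhi : z l ≤ C' * l := by
      rw [hC'def]
      nlinarith [hzpos N, Nat.cast_nonneg (α := ℝ) N]
    have hyz : y l = z l ^ (-(1 / β)) := by
      simp only [hzdef]
      rw [← Real.rpow_mul (hpos l).le, show (-β) * (-(1 / β)) = 1 by field_simp,
        Real.rpow_one]
    constructor
    · rw [hyz, ← Real.mul_rpow hC'pos.le hlpos.le]
      exact Real.rpow_le_rpow_of_nonpos (hzpos l) hzhi (neg_nonpos.mpr (by positivity))
    · rw [hyz, ← Real.mul_rpow (by positivity) hlpos.le]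
      exact Real.rpow_le_rpow_of_nonpos (by positivity) hzlo (neg_nonpos.mpr (by positivity))
end

section
/- The planar curve parametrized by (x(t), y(t), z(t)) = (t^{−p₀}cos t, t^{−q₀}sin t, t^{−1}) for t ≥ 1, where 0 < p₀ ≤ q₀ ≤ 1, lies on the surface x²/z^{2p₀} + y²/z^{2q₀} = 1, and after the time rescaling multiplying the vector field by z^{q₀−p₀} it is a trajectory of the system ẋ = −y − p₀xz^{q₀−p₀+1}, ẏ = xz^{2(q₀−p₀)} − q₀yz^{q₀−p₀+1}, ż = −z^{2+q₀−p₀}. -/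
open Real

lemma inv_rpow_eq_rpow_neg {t : ℝ} (ht : 0 ≤ t) (r : ℝ) : t⁻¹ ^ r = t ^ (-r) := by
  rw [inv_rpow ht, rpow_neg ht]

lemma rpow_neg_mul_sq_div_inv_rpow {t : ℝ} (ht : 0 < t) (a c : ℝ) :
    (t ^ (-a) * c) ^ 2 / t⁻¹ ^ (2 * a) = c ^ 2 := by
  rw [inv_rpow_eq_rpow_neg ht.le, show -(2 * a) = -a + -a by ring, rpow_add ht, rpow_neg ht.le]
  field_simp

lemma HasDerivAt.rpow_neg_mul {f : ℝ → ℝ} {f' t : ℝ} (ht : t ≠ 0) (a : ℝ)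
    (hf : HasDerivAt f f' t) :
    HasDerivAt (fun s => s ^ (-a) * f s) (t ^ (-a) * (f' - a * t⁻¹ * f t)) t := by
  refine ((hasDerivAt_rpow_const (Or.inl ht)).mul hf).congr_deriv ?_
  rw [rpow_sub_one ht]
  ring

section RescaledField

variable {t : ℝ} (p q : ℝ)

lemma rescaled_field_x (ht : 0 < t) :
    t⁻¹ ^ (p - q) * (-(t ^ (-q) * sin t) - p * (t ^ (-p) * cos t) * t⁻¹ ^ (q - p + 1)) =
      t ^ (-p) * (-sin t - p * t⁻¹ * cos t) := by
  simp only [inv_rpow_eq_rpow_neg ht.le, rpow_add ht, rpow_sub ht, rpow_neg ht.le, rpow_one]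
  field_simp

lemma rescaled_field_y (ht : 0 < t) :
    t⁻¹ ^ (p - q) * (t ^ (-p) * cos t * t⁻¹ ^ (2 * (q - p)) -
        q * (t ^ (-q) * sin t) * t⁻¹ ^ (q - p + 1)) =
      t ^ (-q) * (cos t - q * t⁻¹ * sin t) := by
  rw [show 2 * (q - p) = (q - p) + (q - p) by ring]
  simp only [inv_rpow_eq_rpow_neg ht.le, rpow_add ht, rpow_sub ht, rpow_neg ht.le, rpow_one]
  field_simp

lemma rescaled_field_z (ht : 0 < t) :
    t⁻¹ ^ (p - q) * -(t⁻¹ ^ (2 + q - p)) = -(t ^ 2)⁻¹ := by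
  rw [show 2 + q - p = 2 + (q - p) by ring]
  simp only [inv_rpow_eq_rpow_neg ht.le, rpow_add ht, rpow_sub ht, rpow_neg ht.le, rpow_two]
  field_simp

end RescaledField

theorem stmt_16_general (p₀ q₀ : ℝ)
    (x y z : ℝ → ℝ)
    (hx : ∀ t : ℝ, x t = t ^ (-p₀) * Real.cos t)
    (hy : ∀ t : ℝ, y t = t ^ (-q₀) * Real.sin t)
    (hz : ∀ t : ℝ, z t = t⁻¹) :
    (∀ t : ℝ, 0 < t →
      x t ^ 2 / z t ^ (2 * p₀) + y t ^ 2 / z t ^ (2 * q₀) = 1) ∧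
    (∀ t : ℝ, 1 ≤ t →
      HasDerivAt x (z t ^ (p₀ - q₀) * (-y t - p₀ * x t * z t ^ (q₀ - p₀ + 1))) t ∧
      HasDerivAt y (z t ^ (p₀ - q₀) *
        (x t * z t ^ (2 * (q₀ - p₀)) - q₀ * y t * z t ^ (q₀ - p₀ + 1))) t ∧
      HasDerivAt z (z t ^ (p₀ - q₀) * (-(z t ^ (2 + q₀ - p₀)))) t) := by
  obtain rfl : x = fun t => t ^ (-p₀) * cos t := funext hx
  obtain rfl : y = fun t => t ^ (-q₀) * sin t := funext hy
  obtain rfl : z = fun t => t⁻¹ := funext hz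
  refine ⟨fun t ht => ?_, fun t ht => ?_⟩
  · rw [rpow_neg_mul_sq_div_inv_rpow ht, rpow_neg_mul_sq_div_inv_rpow ht, cos_sq_add_sin_sq]
  have ht : 0 < t := one_pos.trans_le ht
  refine ⟨?_, ?_, ?_⟩
  · simpa only [rescaled_field_x p₀ q₀ ht] using (hasDerivAt_cos t).rpow_neg_mul ht.ne' p₀
  · simpa only [rescaled_field_y p₀ q₀ ht] using (hasDerivAt_sin t).rpow_neg_mul ht.ne' q₀
  · simpa only [rescaled_field_z p₀ q₀ ht] using hasDerivAt_inv ht.ne'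

theorem stmt_16 (p₀ q₀ : ℝ) (hp : 0 < p₀) (hpq : p₀ ≤ q₀) (hq : q₀ ≤ 1)
    (x y z : ℝ → ℝ)
    (hx : ∀ t : ℝ, x t = t ^ (-p₀) * Real.cos t)
    (hy : ∀ t : ℝ, y t = t ^ (-q₀) * Real.sin t)
    (hz : ∀ t : ℝ, z t = t⁻¹) :
    (∀ t : ℝ, 0 < t →
      x t ^ 2 / z t ^ (2 * p₀) + y t ^ 2 / z t ^ (2 * q₀) = 1) ∧
    (∀ t : ℝ, 1 ≤ t →
      HasDerivAt x (z t ^ (p₀ - q₀) * (-y t - p₀ * x t * z t ^ (q₀ - p₀ + 1))) t ∧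
      HasDerivAt y (z t ^ (p₀ - q₀) *
        (x t * z t ^ (2 * (q₀ - p₀)) - q₀ * y t * z t ^ (q₀ - p₀ + 1))) t ∧
      HasDerivAt z (z t ^ (p₀ - q₀) * (-(z t ^ (2 + q₀ - p₀)))) t) :=
  stmt_16_general p₀ q₀ x y z hx hy hz
end
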